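/- arXiv:1901.01168 — 2 statements merged into one kernel-verified Lean document; each statement's English description precedes it below -/
import Mathlib

section
/- Let a₀ : (0,∞) → (0,∞) be continuous with t ↦ a₀(t)·t strictly increasing on (0,∞) and a₀(t)·t → 0 as t → 0⁺. Define a : ℝᴺ → ℝᴺ by a(y) = a₀(|y|)·y for y ≠ 0 and a(0) = 0. Then a is continuous on ℝᴺ and strictly monotone, i.e., (a(y) − a(y'), y − y') > 0 for all y ≠ y'. -/
/-!
Write `φ t = a₀ t * t`, so that `‖a y‖ = φ ‖y‖`. Continuity away from `0` is inherited from `a₀`,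
and at `0` it is the limit `φ t → 0`. For monotonicity, expanding the inner product and using
Cauchy–Schwarz `⟪y, y'⟫ ≤ ‖y‖ ‖y'‖` gives
`⟪a y - a y', y - y'⟫ ≥ (φ ‖y‖ - φ ‖y'‖) (‖y‖ - ‖y'‖)`, which is positive when the norms differ
because `φ` is strictly increasing; when the norms agree, `a y - a y' = a₀ ‖y‖ • (y - y')`.
-/

open Set Filter Topology

open scoped RealInnerProductSpace

section Radial

variable {E : Type*}

lemma StrictMonoOn.sub_mul_sub_pos {f : ℝ → ℝ} {s : Set ℝ} (hf : StrictMonoOn f s) {x y : ℝ}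
    (hx : x ∈ s) (hy : y ∈ s) (hne : x ≠ y) : 0 < (f x - f y) * (x - y) := by
  rcases hne.lt_or_gt with h | h
  · exact mul_pos_of_neg_of_neg (sub_neg.mpr (hf hx hy h)) (sub_neg.mpr h)
  · exact mul_pos (sub_pos.mpr (hf hy hx h)) (sub_pos.mpr h)

section Normed

variable [NormedAddCommGroup E] [NormedSpace ℝ E] {a₀ : ℝ → ℝ}

lemma norm_norm_smul_self (a₀ : ℝ → ℝ) (y : E) : ‖a₀ ‖y‖ • y‖ = ‖a₀ ‖y‖ * ‖y‖‖ := by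
  rw [norm_smul, norm_mul, norm_norm]

lemma continuousAt_zero_norm_smul_self
    (hlim : Tendsto (fun t => a₀ t * t) (𝓝[>] 0) (𝓝 0)) :
    ContinuousAt (fun y : E => a₀ ‖y‖ • y) 0 := by
  rw [← continuousWithinAt_compl_self, ContinuousWithinAt, smul_zero,
    tendsto_zero_iff_norm_tendsto_zero]
  simpa only [norm_norm_smul_self, norm_zero, Function.comp_def] using
    (hlim.comp tendsto_norm_nhdsNE_zero).norm

lemma continuous_norm_smul_self (hcont : ContinuousOn a₀ (Ioi 0))
    (hlim : Tendsto (fun t => a₀ t * t) (𝓝[>] 0) (𝓝 0)) :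
    Continuous (fun y : E => a₀ ‖y‖ • y) := by
  refine continuous_iff_continuousAt.mpr fun y => ?_
  rcases eq_or_ne y 0 with rfl | hy
  · exact continuousAt_zero_norm_smul_self hlim
  · have : ContinuousAt a₀ ‖y‖ := hcont.continuousAt (Ioi_mem_nhds (norm_pos_iff.mpr hy))
    exact (this.comp continuous_norm.continuousAt).smul continuousAt_id

end Normed

section InnerProduct

variable [NormedAddCommGroup E] [InnerProductSpace ℝ E]

lemma sub_mul_sub_le_inner_smul_sub_smul {α β : ℝ} (hα : 0 ≤ α) (hβ : 0 ≤ β) (y y' : E) :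
    (α * ‖y‖ - β * ‖y'‖) * (‖y‖ - ‖y'‖) ≤ ⟪α • y - β • y', y - y'⟫ := by
  have hexpand : ⟪α • y - β • y', y - y'⟫ =
      α * ‖y‖ ^ 2 + β * ‖y'‖ ^ 2 - (α + β) * ⟪y, y'⟫ := by
    simp only [inner_sub_left, inner_sub_right, real_inner_smul_left,
      real_inner_self_eq_norm_sq, real_inner_comm y' y]
    ring
  rw [hexpand]
  nlinarith [mul_le_mul_of_nonneg_left (real_inner_le_norm y y') (add_nonneg hα hβ)]

variable {a₀ : ℝ → ℝ}

lemma inner_norm_smul_self_sub_zero (y : E) :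
    ⟪a₀ ‖y‖ • y - a₀ ‖(0 : E)‖ • (0 : E), y - 0⟫ = a₀ ‖y‖ * ‖y‖ ^ 2 := by
  rw [smul_zero, sub_zero, sub_zero, real_inner_smul_left, real_inner_self_eq_norm_sq]

lemma inner_norm_smul_self_sub_pos_of_ne_zero (hpos : ∀ t > 0, 0 < a₀ t)
    (hmono : StrictMonoOn (fun t => a₀ t * t) (Ioi 0)) {y y' : E} (hy : y ≠ 0) (hy' : y' ≠ 0)
    (hne : y ≠ y') : 0 < ⟪a₀ ‖y‖ • y - a₀ ‖y'‖ • y', y - y'⟫ := by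
  have hr : 0 < ‖y‖ := norm_pos_iff.mpr hy
  have hs : 0 < ‖y'‖ := norm_pos_iff.mpr hy'
  by_cases hrs : ‖y‖ = ‖y'‖
  · rw [← hrs, ← smul_sub, real_inner_smul_left, real_inner_self_eq_norm_sq]
    exact mul_pos (hpos _ hr) (pow_pos (norm_pos_iff.mpr (sub_ne_zero.mpr hne)) 2)
  · calc 0 < (a₀ ‖y‖ * ‖y‖ - a₀ ‖y'‖ * ‖y'‖) * (‖y‖ - ‖y'‖) := hmono.sub_mul_sub_pos hr hs hrs
      _ ≤ _ := sub_mul_sub_le_inner_smul_sub_smul (hpos _ hr).le (hpos _ hs).le y y'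

theorem inner_norm_smul_self_sub_pos (hpos : ∀ t > 0, 0 < a₀ t)
    (hmono : StrictMonoOn (fun t => a₀ t * t) (Ioi 0)) {y y' : E} (hne : y ≠ y') :
    0 < ⟪a₀ ‖y‖ • y - a₀ ‖y'‖ • y', y - y'⟫ := by
  rcases eq_or_ne y' 0 with rfl | hy'
  · rw [inner_norm_smul_self_sub_zero]
    exact mul_pos (hpos _ (norm_pos_iff.mpr hne)) (pow_pos (norm_pos_iff.mpr hne) 2)
  rcases eq_or_ne y 0 with rfl | hy
  · rw [← inner_neg_neg, neg_sub, neg_sub, inner_norm_smul_self_sub_zero]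
    exact mul_pos (hpos _ (norm_pos_iff.mpr hy')) (pow_pos (norm_pos_iff.mpr hy') 2)
  exact inner_norm_smul_self_sub_pos_of_ne_zero hpos hmono hy hy' hne

end InnerProduct

end Radial

theorem stmt1_general (N : ℕ) (a₀ : ℝ → ℝ)
    (ha₀pos : ∀ t > 0, 0 < a₀ t)
    (ha₀cont : ContinuousOn a₀ (Ioi 0))
    (hmono : StrictMonoOn (fun t => a₀ t * t) (Ioi 0))
    (hlim : Tendsto (fun t => a₀ t * t) (nhdsWithin 0 (Ioi 0)) (nhds 0))
    (a : EuclideanSpace ℝ (Fin N) → EuclideanSpace ℝ (Fin N))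
    (ha : ∀ y, y ≠ 0 → a y = a₀ ‖y‖ • y) (ha0 : a 0 = 0) :
    Continuous a ∧ ∀ y y' : EuclideanSpace ℝ (Fin N), y ≠ y' →
      0 < (inner ℝ (a y - a y') (y - y') : ℝ) := by
  obtain rfl : a = fun y => a₀ ‖y‖ • y := funext fun y => by
    rcases eq_or_ne y 0 with rfl | hy
    · rw [ha0, smul_zero]
    · exact ha y hy
  exact ⟨continuous_norm_smul_self ha₀cont hlim,
    fun y y' hne => inner_norm_smul_self_sub_pos ha₀pos hmono hne⟩

theorem stmt1 (N : ℕ) (hN : 1 ≤ N) (a₀ : ℝ → ℝ)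
    (ha₀pos : ∀ t > 0, 0 < a₀ t)
    (ha₀cont : ContinuousOn a₀ (Ioi 0))
    (hmono : StrictMonoOn (fun t => a₀ t * t) (Ioi 0))
    (hlim : Tendsto (fun t => a₀ t * t) (nhdsWithin 0 (Ioi 0)) (nhds 0))
    (a : EuclideanSpace ℝ (Fin N) → EuclideanSpace ℝ (Fin N))
    (ha : ∀ y, y ≠ 0 → a y = a₀ ‖y‖ • y) (ha0 : a 0 = 0) :
    Continuous a ∧ ∀ y y' : EuclideanSpace ℝ (Fin N), y ≠ y' →
      0 < (inner ℝ (a y - a y') (y - y') : ℝ) :=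
  stmt1_general N a₀ ha₀pos ha₀cont hmono hlim a ha ha0
end

section
/- Let a : ℝᴺ → ℝᴺ be C¹ on ℝᴺ \ {0} with a(0) = 0 and suppose (∇a(y)ξ, ξ) ≥ (θ(|y|)/|y|)|ξ|² for all y ≠ 0 and all ξ ∈ ℝᴺ, where θ(t) ≥ c₁ t^{p−1} for all t > 0 with c₁ > 0 and 1 < p < ∞. Then (a(y), y) ≥ (c₁/(p−1)) |y|^p for all y ∈ ℝᴺ. -/
/-!
Along the ray `t ↦ t • y`, the function `t ↦ ⟪a (t • y), y⟫` has derivative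
`⟪∇a(t y) y, y⟫ ≥ c₁ t^(p-2) ‖y‖^p`, which is the derivative of `c₁/(p-1) t^(p-1) ‖y‖^p`.
So their difference is monotone on `[0, ∞)`; it vanishes at `t = 0` because `a 0 = 0` and
`p > 1`, and its value at `t = 1` is the claim.
-/

open Set RealInnerProductSpace

section

variable {E : Type*} [NormedAddCommGroup E] [InnerProductSpace ℝ E]

lemma mul_rpow_sub_two_mul_sq_le_inner {p c : ℝ} {θ : ℝ → ℝ}
    (hθ : ∀ t > 0, c * t ^ (p - 1) ≤ θ t) {z : E} (hz : z ≠ 0) {B : E →L[ℝ] E}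
    (hB : ∀ ξ, θ ‖z‖ / ‖z‖ * ‖ξ‖ ^ 2 ≤ ⟪B ξ, ξ⟫) (ξ : E) :
    c * ‖z‖ ^ (p - 2) * ‖ξ‖ ^ 2 ≤ ⟪B ξ, ξ⟫ := by
  have hz' : 0 < ‖z‖ := norm_pos_iff.mpr hz
  calc c * ‖z‖ ^ (p - 2) * ‖ξ‖ ^ 2 = c * ‖z‖ ^ (p - 1) / ‖z‖ * ‖ξ‖ ^ 2 := by
        rw [mul_div_assoc, ← Real.rpow_sub_one hz'.ne']; ring_nf
    _ ≤ θ ‖z‖ / ‖z‖ * ‖ξ‖ ^ 2 := by gcongr; exact hθ _ hz'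
    _ ≤ ⟪B ξ, ξ⟫ := hB ξ

lemma HasFDerivAt.hasDerivAt_inner_comp_smul {a : E → E} {A : E →L[ℝ] E} {t : ℝ} {y : E}
    (h : HasFDerivAt a A (t • y)) :
    HasDerivAt (fun s : ℝ => ⟪a (s • y), y⟫) ⟪A y, y⟫ t := by
  simpa using (h.comp_hasDerivAt t ((hasDerivAt_id t).smul_const y)).inner ℝ
    (hasDerivAt_const t y)

theorem monotoneOn_inner_comp_smul_sub_rpow {p c : ℝ} (hp : 1 < p) {θ : ℝ → ℝ}
    (hθ : ∀ t > 0, c * t ^ (p - 1) ≤ θ t) {a : E → E} {A : E → E →L[ℝ] E}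
    (ha : Continuous a) (hderiv : ∀ y, y ≠ 0 → HasFDerivAt a (A y) y)
    (hell : ∀ y, y ≠ 0 → ∀ ξ, θ ‖y‖ / ‖y‖ * ‖ξ‖ ^ 2 ≤ ⟪A y ξ, ξ⟫) {y : E} (hy : y ≠ 0) :
    MonotoneOn (fun t : ℝ => ⟪a (t • y), y⟫ - c / (p - 1) * t ^ (p - 1) * ‖y‖ ^ p)
      (Ici 0) := by
  have hp1 : p - 1 ≠ 0 := (sub_pos.2 hp).ne'
  refine monotoneOn_of_hasDerivWithinAt_nonneg (convex_Ici 0)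
    (f' := fun t => ⟪A (t • y) y, y⟫ - c * t ^ (p - 2) * ‖y‖ ^ p) ?_ ?_ ?_
  · have hrpow := Real.continuous_rpow_const (sub_pos.2 hp).le
    fun_prop
  · rw [interior_Ici]
    intro t (ht : 0 < t)
    have hty : t • y ≠ 0 := smul_ne_zero ht.ne' hy
    have hpow := ((Real.hasDerivAt_rpow_const (p := p - 1) (Or.inl ht.ne')).const_mul
      (c / (p - 1))).mul_const (‖y‖ ^ p)
    refine ((hderiv _ hty).hasDerivAt_inner_comp_smul.sub hpow).hasDerivWithinAt.congr_deriv ?_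
    rw [show p - 1 - 1 = p - 2 by ring]
    field_simp
  · rw [interior_Ici]
    intro t (ht : 0 < t)
    have hty : t • y ≠ 0 := smul_ne_zero ht.ne' hy
    have hny : 0 < ‖y‖ := norm_pos_iff.mpr hy
    have hnorm : ‖t • y‖ ^ (p - 2) * ‖y‖ ^ 2 = t ^ (p - 2) * ‖y‖ ^ p := by
      rw [norm_smul, Real.norm_of_nonneg ht.le, Real.mul_rpow ht.le hny.le, mul_assoc,
        ← Real.rpow_natCast, ← Real.rpow_add hny]
      norm_num
    have hbound := mul_rpow_sub_two_mul_sq_le_inner hθ hty (hell _ hty) y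
    rw [mul_assoc, hnorm] at hbound
    linarith

end

theorem stmt4_general (N : ℕ) (p c₁ : ℝ) (hp : 1 < p)
    (θ : ℝ → ℝ)
    (hθ : ∀ t > 0, c₁ * t ^ (p - 1) ≤ θ t)
    (a : EuclideanSpace ℝ (Fin N) → EuclideanSpace ℝ (Fin N))
    (A : EuclideanSpace ℝ (Fin N) →
      (EuclideanSpace ℝ (Fin N) →L[ℝ] EuclideanSpace ℝ (Fin N)))
    (hacont : Continuous a) (ha0 : a 0 = 0)
    (hderiv : ∀ y, y ≠ 0 → HasFDerivAt a (A y) y)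
    (hell : ∀ y, y ≠ 0 → ∀ ξ : EuclideanSpace ℝ (Fin N),
      θ ‖y‖ / ‖y‖ * ‖ξ‖ ^ 2 ≤ (inner ℝ (A y ξ) ξ : ℝ)) :
    ∀ y, c₁ / (p - 1) * ‖y‖ ^ p ≤ (inner ℝ (a y) y : ℝ) := by
  intro y
  rcases eq_or_ne y 0 with rfl | hy
  · simp [ha0, Real.zero_rpow (by positivity : p ≠ 0)]
  have h01 := monotoneOn_inner_comp_smul_sub_rpow hp hθ hacont hderiv hell hy
    self_mem_Ici (mem_Ici.2 zero_le_one) zero_le_one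
  simp only [zero_smul, ha0, inner_zero_left, Real.zero_rpow (sub_pos.2 hp).ne', one_smul,
    Real.one_rpow] at h01
  linarith

theorem stmt4 (N : ℕ) (hN : 1 ≤ N) (p c₁ : ℝ) (hp : 1 < p) (hc₁ : 0 < c₁)
    (θ : ℝ → ℝ) (hθpos : ∀ t > 0, 0 < θ t)
    (hθ : ∀ t > 0, c₁ * t ^ (p - 1) ≤ θ t)
    (a : EuclideanSpace ℝ (Fin N) → EuclideanSpace ℝ (Fin N))
    (A : EuclideanSpace ℝ (Fin N) →
      (EuclideanSpace ℝ (Fin N) →L[ℝ] EuclideanSpace ℝ (Fin N)))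
    (hacont : Continuous a) (ha0 : a 0 = 0)
    (hderiv : ∀ y, y ≠ 0 → HasFDerivAt a (A y) y)
    (hAcont : ContinuousOn A {y | y ≠ 0})
    (hell : ∀ y, y ≠ 0 → ∀ ξ : EuclideanSpace ℝ (Fin N),
      θ ‖y‖ / ‖y‖ * ‖ξ‖ ^ 2 ≤ (inner ℝ (A y ξ) ξ : ℝ)) :
    ∀ y, c₁ / (p - 1) * ‖y‖ ^ p ≤ (inner ℝ (a y) y : ℝ) :=
  stmt4_general N p c₁ hp θ hθ a A hacont ha0 hderiv hell
end
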